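/- arXiv:2203.01320 — 4 statements merged into one kernel-verified Lean document; each statement's English description precedes it below -/
import Mathlib

section
/- Let P₁, P₂ be basis projections on the self-dual Hilbert space (H, Γ) and let {ψ̃_j}_{j∈J} be an orthonormal basis of the range h_{P₁} of P₁, so that {ψ̃_j}_{j∈J} ∪ {Γψ̃_j}_{j∈J} is an orthonormal basis of H. Then the Hilbert–Schmidt norm of P₁ − P₂ satisfies ‖P₁ − P₂‖²_HS = 2 Σ_{j∈J} ⟨ψ̃_j, (1_H − P₂)ψ̃_j⟩; consequently P₁ − P₂ is Hilbert–Schmidt if, and only if, Σ_{j∈J} ⟨ψ̃_j, (1_H − P₂)ψ̃_j⟩ < ∞. -/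
/-! On the vectors `ψ̃_j` the operator `P₁ - P₂` acts as `1 - P₂`. On the vectors `Γ ψ̃_j` it
acts as `-P₂`, because `‖P₁ Γ ψ̃_j‖ = ‖Γ P₁ Γ ψ̃_j‖ = ‖(1 - P₁) ψ̃_j‖ = 0`; and
`‖P₂ Γ ψ̃_j‖ = ‖Γ P₂ Γ ψ̃_j‖ = ‖(1 - P₂) ψ̃_j‖` since `Γ` is isometric. As `1 - P₂` is an
orthogonal projection, both squared norms equal `⟨ψ̃_j, (1 - P₂) ψ̃_j⟩`, whence the factor `2`.

For the Hilbert--Schmidt criterion, Parseval and Fubini for nonnegative sums give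
`Σ_i ‖T e_i‖² = Σ_j ‖T* f_j‖²` for any two Hilbert bases, so the sum does not depend on the basis.
`IsHilbertSchmidt` asks for a basis indexed by a type in `Type`; in a separable space every
Hilbert basis is countable, so it can be reindexed along `equivShrink`. -/

open scoped ComplexInnerProductSpace ENNReal

noncomputable section

/-- `T` is a Hilbert--Schmidt operator: `Σ_i ‖T ψ_i‖² < ∞` for an (equivalently,
any) orthonormal basis `{ψ_i}` of `H`. -/
def IsHilbertSchmidt {H : Type*} [NormedAddCommGroup H] [InnerProductSpace ℂ H]
    [CompleteSpace H] (T : H →L[ℂ] H) : Prop :=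
  ∃ (ι : Type) (b : HilbertBasis ι ℂ H), Summable fun i : ι => ‖T (b i)‖ ^ 2

namespace HilbertBasis

variable {ι ι' κ 𝕜 E F : Type*} [RCLike 𝕜] [NormedAddCommGroup E] [InnerProductSpace 𝕜 E]
  [NormedAddCommGroup F] [InnerProductSpace 𝕜 F]

theorem hasSum_norm_inner_sq (b : HilbertBasis ι 𝕜 E) (x : E) :
    HasSum (fun i => ‖inner 𝕜 (b i) x‖ ^ 2) (‖x‖ ^ 2) := by
  simpa only [ENNReal.toReal_ofNat, Real.rpow_two, b.repr_apply_apply,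
    LinearIsometryEquiv.norm_map] using lp.hasSum_norm (p := 2) (by norm_num) (b.repr x)

theorem tsum_nnnorm_inner_sq (b : HilbertBasis ι 𝕜 E) (x : E) :
    ∑' i, (‖inner 𝕜 (b i) x‖₊ : ℝ≥0∞) ^ 2 = (‖x‖₊ : ℝ≥0∞) ^ 2 := by
  have h : HasSum (fun i => ‖inner 𝕜 (b i) x‖₊ ^ 2) (‖x‖₊ ^ 2) := by
    simpa only [← NNReal.hasSum_coe, NNReal.coe_pow, coe_nnnorm] using b.hasSum_norm_inner_sq x
  exact_mod_cast (ENNReal.hasSum_coe.2 h).tsum_eq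

theorem tsum_nnnorm_inner_sq' (b : HilbertBasis ι 𝕜 E) (x : E) :
    ∑' i, (‖inner 𝕜 x (b i)‖₊ : ℝ≥0∞) ^ 2 = (‖x‖₊ : ℝ≥0∞) ^ 2 := by
  rw [← b.tsum_nnnorm_inner_sq x]
  congr! 3 with i
  exact congrArg _ (NNReal.eq (norm_inner_symm (𝕜 := 𝕜) x (b i)))

def hsNormSq (b : HilbertBasis ι 𝕜 E) (T : E →L[𝕜] F) : ℝ≥0∞ :=
  ∑' i, (‖T (b i)‖₊ : ℝ≥0∞) ^ 2

theorem summable_norm_apply_sq_iff (b : HilbertBasis ι 𝕜 E) (T : E →L[𝕜] F) :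
    (Summable fun i => ‖T (b i)‖ ^ 2) ↔ b.hsNormSq T < ⊤ := by
  simp_rw [hsNormSq, lt_top_iff_ne_top, ← ENNReal.coe_pow, ENNReal.tsum_coe_ne_top_iff_summable,
    ← NNReal.summable_coe, NNReal.coe_pow, coe_nnnorm]

theorem countable [TopologicalSpace.SeparableSpace E] (b : HilbertBasis ι 𝕜 E) : Countable ι := by
  -- basis vectors are `√2` apart, so the balls of radius `1/2` around them are disjoint
  refine Pairwise.countable_of_isOpen_disjoint (s := fun i => Metric.ball (b i) 2⁻¹)
    (fun i j hij => Metric.ball_disjoint_ball ?_) (fun _ => Metric.isOpen_ball)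
    (fun _ => Metric.nonempty_ball.2 (by norm_num))
  have hsq : ‖b i - b j‖ ^ 2 = 2 := by
    rw [@norm_sub_sq 𝕜, b.orthonormal.1 i, b.orthonormal.1 j, b.orthonormal.2 hij, map_zero]
    norm_num
  rw [dist_eq_norm]
  nlinarith [norm_nonneg (b i - b j)]

variable [CompleteSpace E] [CompleteSpace F]

theorem hsNormSq_eq_hsNormSq_adjoint (e : HilbertBasis ι 𝕜 E) (f : HilbertBasis κ 𝕜 F)
    (T : E →L[𝕜] F) : e.hsNormSq T = f.hsNormSq (ContinuousLinearMap.adjoint T) :=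
  calc e.hsNormSq T
      = ∑' i, ∑' j, (‖inner 𝕜 (f j) (T (e i))‖₊ : ℝ≥0∞) ^ 2 :=
        tsum_congr fun i => (f.tsum_nnnorm_inner_sq _).symm
    _ = ∑' j, ∑' i, (‖inner 𝕜 (ContinuousLinearMap.adjoint T (f j)) (e i)‖₊ : ℝ≥0∞) ^ 2 := by
        simp_rw [ContinuousLinearMap.adjoint_inner_left]
        exact ENNReal.tsum_comm
    _ = f.hsNormSq (ContinuousLinearMap.adjoint T) :=
        tsum_congr fun j => e.tsum_nnnorm_inner_sq' _

theorem hsNormSq_eq_hsNormSq (e : HilbertBasis ι 𝕜 E) (e' : HilbertBasis κ 𝕜 E) (T : E →L[𝕜] F) :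
    e.hsNormSq T = e'.hsNormSq T := by
  obtain ⟨_, f, _⟩ := exists_hilbertBasis 𝕜 F
  rw [e.hsNormSq_eq_hsNormSq_adjoint f, e'.hsNormSq_eq_hsNormSq_adjoint f]

def reindex (b : HilbertBasis ι 𝕜 E) (e : ι ≃ ι') : HilbertBasis ι' 𝕜 E :=
  HilbertBasis.mk (b.orthonormal.comp e.symm e.symm.injective) <| by
    rw [e.symm.surjective.range_comp]
    exact b.dense_span.ge

end HilbertBasis

theorem isHilbertSchmidt_iff_hsNormSq_lt_top {H ι : Type*} [NormedAddCommGroup H]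
    [InnerProductSpace ℂ H] [CompleteSpace H] [TopologicalSpace.SeparableSpace H]
    (b : HilbertBasis ι ℂ H) (T : H →L[ℂ] H) : IsHilbertSchmidt T ↔ b.hsNormSq T < ⊤ := by
  constructor
  · rintro ⟨_, c, hc⟩
    rwa [c.summable_norm_apply_sq_iff, c.hsNormSq_eq_hsNormSq b] at hc
  · intro h
    have := b.countable
    let c := b.reindex (equivShrink.{0} ι)
    refine ⟨_, c, ?_⟩
    rwa [c.summable_norm_apply_sq_iff, c.hsNormSq_eq_hsNormSq b]

section BasisProjection

variable {𝕜 E : Type*} [RCLike 𝕜] [NormedAddCommGroup E] [InnerProductSpace 𝕜 E]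

theorem norm_sub_apply_sq_eq_re_inner {P : E →L[𝕜] E} (hidem : ∀ ψ, P (P ψ) = P ψ)
    (hsymm : (P : E →ₗ[𝕜] E).IsSymmetric) (ψ : E) :
    ‖ψ - P ψ‖ ^ 2 = RCLike.re (inner 𝕜 ψ (ψ - P ψ)) := by
  have hperp : inner 𝕜 (P ψ) (ψ - P ψ) = 0 := by
    rw [← ContinuousLinearMap.coe_coe, hsymm, ContinuousLinearMap.coe_coe, map_sub, hidem,
      sub_self, inner_zero_right]
  rw [← inner_self_eq_norm_sq (𝕜 := 𝕜), inner_sub_left, hperp, sub_zero]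

variable {Γ : E →ₗ⋆[𝕜] E}

theorem norm_map_of_inner_map_map (hΓ : ∀ φ ψ, inner 𝕜 (Γ φ) (Γ ψ) = inner 𝕜 ψ φ) (φ : E) :
    ‖Γ φ‖ = ‖φ‖ := by
  rw [norm_eq_sqrt_re_inner (𝕜 := 𝕜), hΓ, ← norm_eq_sqrt_re_inner]

variable {P : E →L[𝕜] E}

theorem norm_apply_map_eq_norm_sub (hΓ : ∀ φ ψ, inner 𝕜 (Γ φ) (Γ ψ) = inner 𝕜 ψ φ)
    (hbp : ∀ ψ, Γ (P (Γ ψ)) = ψ - P ψ) (ψ : E) : ‖P (Γ ψ)‖ = ‖ψ - P ψ‖ := by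
  rw [← norm_map_of_inner_map_map hΓ, hbp]

theorem apply_map_eq_zero_of_apply_eq_self (hΓ : ∀ φ ψ, inner 𝕜 (Γ φ) (Γ ψ) = inner 𝕜 ψ φ)
    (hbp : ∀ ψ, Γ (P (Γ ψ)) = ψ - P ψ) {ψ : E} (hψ : P ψ = ψ) : P (Γ ψ) = 0 := by
  rw [← norm_eq_zero, norm_apply_map_eq_norm_sub hΓ hbp, hψ, sub_self, norm_zero]

end BasisProjection

theorem hs_norm_sq_eq_twice_sum_general
    {H : Type*} [NormedAddCommGroup H] [InnerProductSpace ℂ H] [CompleteSpace H]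
    [TopologicalSpace.SeparableSpace H]
    (Γ : H →ₗ⋆[ℂ] H)
    (hΓinner : ∀ φ ψ : H, ⟪Γ φ, Γ ψ⟫ = ⟪ψ, φ⟫)
    (P₁ P₂ : H →L[ℂ] H)
    (hbp₁ : ∀ ψ : H, Γ (P₁ (Γ ψ)) = ψ - P₁ ψ)
    (hidem₂ : ∀ ψ : H, P₂ (P₂ ψ) = P₂ ψ)
    (hsa₂ : ∀ φ ψ : H, ⟪P₂ φ, ψ⟫ = ⟪φ, P₂ ψ⟫)
    (hbp₂ : ∀ ψ : H, Γ (P₂ (Γ ψ)) = ψ - P₂ ψ)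
    {J : Type*} (ψt : J → H)
    (hfix : ∀ j : J, P₁ (ψt j) = ψt j)
    (b : HilbertBasis (J ⊕ J) ℂ H)
    (hb₁ : ∀ j : J, b (Sum.inl j) = ψt j)
    (hb₂ : ∀ j : J, b (Sum.inr j) = Γ (ψt j)) :
    (∑' i : J ⊕ J, (‖(P₁ - P₂) (b i)‖₊ : ℝ≥0∞) ^ 2) =
        2 * ∑' j : J, ENNReal.ofReal (⟪ψt j, ψt j - P₂ (ψt j)⟫).re ∧
      (IsHilbertSchmidt (P₁ - P₂) ↔
        ∑' j : J, ENNReal.ofReal (⟪ψt j, ψt j - P₂ (ψt j)⟫).re < ⊤) := by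
  have hinl (j : J) : ‖(P₁ - P₂) (b (.inl j))‖ = ‖ψt j - P₂ (ψt j)‖ := by
    rw [hb₁, sub_apply, hfix]
  have hinr (j : J) : ‖(P₁ - P₂) (b (.inr j))‖ = ‖ψt j - P₂ (ψt j)‖ := by
    rw [hb₂, sub_apply, apply_map_eq_zero_of_apply_eq_self hΓinner hbp₁ (hfix j), zero_sub,
      norm_neg, norm_apply_map_eq_norm_sub hΓinner hbp₂]
  have hHS : b.hsNormSq (P₁ - P₂) =
      2 * ∑' j : J, ENNReal.ofReal (⟪ψt j, ψt j - P₂ (ψt j)⟫).re := by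
    rw [HilbertBasis.hsNormSq, ENNReal.summable.tsum_sum ENNReal.summable, two_mul]
    simp only [← enorm_eq_nnnorm, ← ofReal_norm, hinl, hinr, ← ENNReal.ofReal_pow (norm_nonneg _),
      norm_sub_apply_sq_eq_re_inner hidem₂ hsa₂, RCLike.re_to_complex]
  refine ⟨hHS, ?_⟩
  rw [isHilbertSchmidt_iff_hsNormSq_lt_top b, hHS]
  exact ⟨fun h => ENNReal.lt_top_of_mul_ne_top_right h.ne two_ne_zero,
    ENNReal.mul_lt_top ENNReal.ofNat_lt_top⟩

/-- for basis projections `P₁, P₂` on the self-dual Hilbert space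
`(H, Γ)` and an orthonormal basis `{ψ̃_j}_{j ∈ J}` of `ran P₁` such that
`{ψ̃_j} ∪ {Γ ψ̃_j}` is an orthonormal basis of `H`, one has
`‖P₁ - P₂‖²_HS = 2 Σ_j ⟨ψ̃_j, (1 - P₂) ψ̃_j⟩`; consequently `P₁ - P₂` is
Hilbert--Schmidt iff `Σ_j ⟨ψ̃_j, (1 - P₂) ψ̃_j⟩ < ∞`. -/
theorem hs_norm_sq_eq_twice_sum
    {H : Type*} [NormedAddCommGroup H] [InnerProductSpace ℂ H] [CompleteSpace H]
    [TopologicalSpace.SeparableSpace H]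
    (Γ : H →ₗ⋆[ℂ] H)
    (hΓΓ : ∀ φ : H, Γ (Γ φ) = φ)
    (hΓinner : ∀ φ ψ : H, ⟪Γ φ, Γ ψ⟫ = ⟪ψ, φ⟫)
    (P₁ P₂ : H →L[ℂ] H)
    (hidem₁ : ∀ ψ : H, P₁ (P₁ ψ) = P₁ ψ)
    (hsa₁ : ∀ φ ψ : H, ⟪P₁ φ, ψ⟫ = ⟪φ, P₁ ψ⟫)
    (hbp₁ : ∀ ψ : H, Γ (P₁ (Γ ψ)) = ψ - P₁ ψ)
    (hidem₂ : ∀ ψ : H, P₂ (P₂ ψ) = P₂ ψ)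
    (hsa₂ : ∀ φ ψ : H, ⟪P₂ φ, ψ⟫ = ⟪φ, P₂ ψ⟫)
    (hbp₂ : ∀ ψ : H, Γ (P₂ (Γ ψ)) = ψ - P₂ ψ)
    {J : Type*} (ψt : J → H)
    (hfix : ∀ j : J, P₁ (ψt j) = ψt j)
    (b : HilbertBasis (J ⊕ J) ℂ H)
    (hb₁ : ∀ j : J, b (Sum.inl j) = ψt j)
    (hb₂ : ∀ j : J, b (Sum.inr j) = Γ (ψt j)) :
    (∑' i : J ⊕ J, (‖(P₁ - P₂) (b i)‖₊ : ℝ≥0∞) ^ 2) =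
        2 * ∑' j : J, ENNReal.ofReal (⟪ψt j, ψt j - P₂ (ψt j)⟫).re ∧
      (IsHilbertSchmidt (P₁ - P₂) ↔
        ∑' j : J, ENNReal.ofReal (⟪ψt j, ψt j - P₂ (ψt j)⟫).re < ⊤) :=
  hs_norm_sq_eq_twice_sum_general Γ hΓinner P₁ P₂ hbp₁ hidem₂ hsa₂ hbp₂ ψt hfix b hb₁ hb₂
end
end

section
/- Let P₁, P₂ be basis projections on the self-dual Hilbert space (H, Γ), let {ψ̃_j}_{j∈J} be an orthonormal basis of the range of P₁ and {ψ̆_i}_{i∈J} an orthonormal basis of the range of P₂. Then Σ_{j∈J} ⟨ψ̃_j, (1_H − P₂)ψ̃_j⟩ = Σ_{i,j∈J} |⟨ψ̆_i, Γψ̃_j⟩|²; in particular P₁ − P₂ is Hilbert–Schmidt if, and only if, Σ_{i,j∈J} |⟨ψ̆_i, Γψ̃_j⟩|² < ∞. -/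
/-!
Since `Γ P Γ = 1 - P`, an orthonormal basis `ψ` of `ran P` together with `Γ ψ` is a Hilbert
basis of `H`. In this basis `‖P₂ φ‖² = Σ_i |⟨ψ̆_i, φ⟩|²`, and
`⟨ψ̃_j, (1 - P₂) ψ̃_j⟩ = ‖P₂ Γ ψ̃_j‖²`, which gives the identity. Moreover `P₁ - P₂` maps
`ψ̃_j` to `Γ P₂ Γ ψ̃_j` and `Γ ψ̃_j` to `-P₂ Γ ψ̃_j`, so on the basis `ψ̃ ∪ Γ ψ̃` its
Hilbert–Schmidt sum is twice the double sum; that sum does not depend on the basis.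
-/

open scoped ComplexInnerProductSpace ENNReal

noncomputable section

theorem ENNReal.ofReal_norm_sq {E : Type*} [SeminormedAddGroup E] (x : E) :
    ENNReal.ofReal (‖x‖ ^ 2) = (‖x‖₊ : ℝ≥0∞) ^ 2 := by
  rw [ENNReal.ofReal_pow (norm_nonneg _), ofReal_norm, enorm_eq_nnnorm]

theorem summable_norm_sq_iff_tsum_lt_top {ι E : Type*} [SeminormedAddGroup E] (f : ι → E) :
    Summable (fun i => ‖f i‖ ^ 2) ↔ ∑' i, (‖f i‖₊ : ℝ≥0∞) ^ 2 < ⊤ := by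
  simp_rw [lt_top_iff_ne_top, ← ENNReal.coe_pow, ENNReal.tsum_coe_ne_top_iff_summable_coe,
    NNReal.coe_pow, coe_nnnorm]

section HilbertBasis

variable {𝕜 H : Type*} [RCLike 𝕜] [NormedAddCommGroup H] [InnerProductSpace 𝕜 H]

theorem Orthonormal.sum_elim {ι κ : Type*} {u : ι → H} {v : κ → H} (hu : Orthonormal 𝕜 u)
    (hv : Orthonormal 𝕜 v) (huv : ∀ i j, inner 𝕜 (u i) (v j) = 0) :
    Orthonormal 𝕜 (Sum.elim u v) := by
  classical
  rw [orthonormal_iff_ite] at hu hv ⊢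
  rintro (i | i) (j | j)
  · simpa using hu i j
  · simpa using huv i j
  · simpa [inner_eq_zero_symm] using huv j i
  · simpa using hv i j

theorem Orthonormal.countable [TopologicalSpace.SeparableSpace H] {ι : Type*} {v : ι → H}
    (hv : Orthonormal 𝕜 v) : Countable ι := by
  refine Pairwise.countable_of_isOpen_disjoint (s := fun i => Metric.ball (v i) (1 / 2))
    (fun i j hij => Metric.ball_disjoint_ball ?_) (fun _ => Metric.isOpen_ball)
    (fun _ => Metric.nonempty_ball.2 (by norm_num))
  have : dist (v i) (v j) ^ 2 = 2 := by
    rw [dist_eq_norm, @norm_sub_sq 𝕜, hv.2 hij, hv.1 i, hv.1 j]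
    norm_num
  nlinarith [dist_nonneg (x := v i) (y := v j)]

/-- `IsHilbertSchmidt` asks for a basis indexed by a `Type`: separability makes any index
countable, hence small. -/
theorem exists_hilbertBasis_of_separableSpace [CompleteSpace H]
    [TopologicalSpace.SeparableSpace H] :
    ∃ ι : Type, Nonempty (HilbertBasis ι 𝕜 H) := by
  obtain ⟨w, b, -⟩ := exists_hilbertBasis 𝕜 H
  have := b.orthonormal.countable
  let e := (equivShrink.{0} w).symm
  refine ⟨Shrink w, ⟨HilbertBasis.mk (b.orthonormal.comp e e.injective) ?_⟩⟩
  rw [Set.range_comp, e.range_eq_univ, Set.image_univ, b.dense_span]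

theorem HilbertBasis.tsum_nnnorm_inner_sq_s12 {ι : Type*} (b : HilbertBasis ι 𝕜 H) (x : H) :
    ∑' i, (‖inner 𝕜 (b i) x‖₊ : ℝ≥0∞) ^ 2 = (‖x‖₊ : ℝ≥0∞) ^ 2 := by
  have h := lp.hasSum_norm (p := 2) (by norm_num) (b.repr x)
  simp only [ENNReal.toReal_ofNat, Real.rpow_two, b.repr_apply_apply,
    LinearIsometryEquiv.norm_map] at h
  simp_rw [← ENNReal.ofReal_norm_sq]
  rw [← ENNReal.ofReal_tsum_of_nonneg (fun _ => sq_nonneg _) h.summable, h.tsum_eq]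

variable [CompleteSpace H]

theorem HilbertBasis.tsum_nnnorm_apply_sq_eq_adjoint {ι κ : Type*} (b : HilbertBasis ι 𝕜 H)
    (c : HilbertBasis κ 𝕜 H) (T : H →L[𝕜] H) :
    ∑' i, (‖T (b i)‖₊ : ℝ≥0∞) ^ 2 = ∑' k, (‖T.adjoint (c k)‖₊ : ℝ≥0∞) ^ 2 := by
  calc ∑' i, (‖T (b i)‖₊ : ℝ≥0∞) ^ 2
      = ∑' i, ∑' k, (‖inner 𝕜 (c k) (T (b i))‖₊ : ℝ≥0∞) ^ 2 := by
        simp_rw [c.tsum_nnnorm_inner_sq_s12]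
    _ = ∑' k, ∑' i, (‖inner 𝕜 (b i) (T.adjoint (c k))‖₊ : ℝ≥0∞) ^ 2 := by
        rw [ENNReal.tsum_comm]
        simp_rw [ContinuousLinearMap.adjoint_inner_right, ← inner_conj_symm (c _),
          RCLike.nnnorm_conj]
    _ = ∑' k, (‖T.adjoint (c k)‖₊ : ℝ≥0∞) ^ 2 := by
        simp_rw [b.tsum_nnnorm_inner_sq_s12]

theorem HilbertBasis.tsum_nnnorm_apply_sq_eq {ι κ : Type*} (b : HilbertBasis ι 𝕜 H)
    (c : HilbertBasis κ 𝕜 H) (T : H →L[𝕜] H) :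
    ∑' i, (‖T (b i)‖₊ : ℝ≥0∞) ^ 2 = ∑' k, (‖T (c k)‖₊ : ℝ≥0∞) ^ 2 := by
  rw [b.tsum_nnnorm_apply_sq_eq_adjoint c, c.tsum_nnnorm_apply_sq_eq_adjoint c T.adjoint,
    ContinuousLinearMap.adjoint_adjoint]

end HilbertBasis

theorem isHilbertSchmidt_iff_tsum_lt_top {H : Type*} [NormedAddCommGroup H]
    [InnerProductSpace ℂ H] [CompleteSpace H] [TopologicalSpace.SeparableSpace H] {ι : Type*}
    (b : HilbertBasis ι ℂ H) (T : H →L[ℂ] H) :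
    IsHilbertSchmidt T ↔ ∑' i, (‖T (b i)‖₊ : ℝ≥0∞) ^ 2 < ⊤ := by
  constructor
  · rintro ⟨κ, c, hc⟩
    rwa [b.tsum_nnnorm_apply_sq_eq c, ← summable_norm_sq_iff_tsum_lt_top]
  · intro h
    obtain ⟨κ, ⟨c⟩⟩ := exists_hilbertBasis_of_separableSpace (𝕜 := ℂ) (H := H)
    rw [b.tsum_nnnorm_apply_sq_eq c, ← summable_norm_sq_iff_tsum_lt_top] at h
    exact ⟨κ, c, h⟩

section BasisProjection

variable {H : Type*} [NormedAddCommGroup H] [InnerProductSpace ℂ H] {Γ : H →ₗ⋆[ℂ] H}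
  {P : H →L[ℂ] H}

theorem norm_map_of_inner_map_map_s12 (hΓinner : ∀ φ ψ : H, ⟪Γ φ, Γ ψ⟫ = ⟪ψ, φ⟫) (x : H) :
    ‖Γ x‖ = ‖x‖ := by
  rw [norm_eq_sqrt_re_inner (𝕜 := ℂ), norm_eq_sqrt_re_inner (𝕜 := ℂ), hΓinner]

theorem Orthonormal.comp_of_inner_map_map (hΓinner : ∀ φ ψ : H, ⟪Γ φ, Γ ψ⟫ = ⟪ψ, φ⟫)
    {J : Type*} {ψ : J → H} (hψ : Orthonormal ℂ ψ) : Orthonormal ℂ (Γ ∘ ψ) := by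
  classical
  rw [orthonormal_iff_ite] at hψ ⊢
  intro i j
  simp only [Function.comp_apply, hΓinner, hψ j i, eq_comm]

theorem apply_map_eq_zero_of_apply_eq_self_s12 (hΓΓ : ∀ φ : H, Γ (Γ φ) = φ)
    (hbp : ∀ ψ : H, Γ (P (Γ ψ)) = ψ - P ψ) {x : H} (hx : P x = x) : P (Γ x) = 0 := by
  simpa [hΓΓ, hx] using congrArg Γ (hbp x)

theorem inner_sub_apply_eq_norm_sq (hΓΓ : ∀ φ : H, Γ (Γ φ) = φ)
    (hΓinner : ∀ φ ψ : H, ⟪Γ φ, Γ ψ⟫ = ⟪ψ, φ⟫) (hidem : ∀ ψ : H, P (P ψ) = P ψ)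
    (hsa : ∀ φ ψ : H, ⟪P φ, ψ⟫ = ⟪φ, P ψ⟫) (hbp : ∀ ψ : H, Γ (P (Γ ψ)) = ψ - P ψ) (x : H) :
    ⟪x, x - P x⟫ = ((‖P (Γ x)‖ ^ 2 : ℝ) : ℂ) :=
  calc ⟪x, x - P x⟫ = ⟪Γ (Γ x), Γ (P (Γ x))⟫ := by rw [hΓΓ, hbp]
    _ = ⟪P (P (Γ x)), Γ x⟫ := by rw [hΓinner, hidem]
    _ = ((‖P (Γ x)‖ ^ 2 : ℝ) : ℂ) := by rw [hsa, inner_self_eq_norm_sq_to_K]; norm_cast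

theorem apply_eq_zero_of_mem_orthogonal (hsa : ∀ φ ψ : H, ⟪P φ, ψ⟫ = ⟪φ, P ψ⟫) {J : Type*}
    {ψ : J → H} (htotal : (Submodule.span ℂ (Set.range ψ)).topologicalClosure =
      LinearMap.range (P : H →ₗ[ℂ] H))
    {z : H} (hz : z ∈ (Submodule.span ℂ (Set.range ψ))ᗮ) : P z = 0 := by
  rw [← Submodule.orthogonal_closure, htotal] at hz
  rw [← inner_self_eq_zero (𝕜 := ℂ), hsa]
  exact Submodule.inner_left_of_mem_orthogonal (LinearMap.mem_range_self _ _) hz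

variable (hΓΓ : ∀ φ : H, Γ (Γ φ) = φ) (hΓinner : ∀ φ ψ : H, ⟪Γ φ, Γ ψ⟫ = ⟪ψ, φ⟫)
  (hsa : ∀ φ ψ : H, ⟪P φ, ψ⟫ = ⟪φ, P ψ⟫) (hbp : ∀ ψ : H, Γ (P (Γ ψ)) = ψ - P ψ)
  {J : Type*} {ψ : J → H} (hψ_on : Orthonormal ℂ ψ) (hψ_fix : ∀ j : J, P (ψ j) = ψ j)
  (hψ_total : (Submodule.span ℂ (Set.range ψ)).topologicalClosure =
    LinearMap.range (P : H →ₗ[ℂ] H))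
include hΓΓ hΓinner hsa hbp hψ_on hψ_fix hψ_total

theorem exists_hilbertBasis_sum_elim [CompleteSpace H] :
    ∃ b : HilbertBasis (J ⊕ J) ℂ H, ⇑b = Sum.elim ψ (Γ ∘ ψ) := by
  have hcross : ∀ i j, ⟪ψ i, Γ (ψ j)⟫ = 0 := fun i j => by
    rw [← hψ_fix i, hsa, apply_map_eq_zero_of_apply_eq_self_s12 hΓΓ hbp (hψ_fix j), inner_zero_right]
  let K := Submodule.span ℂ (Set.range (Sum.elim ψ (Γ ∘ ψ)))
  refine ⟨.mkOfOrthogonalEqBot (hψ_on.sum_elim (hψ_on.comp_of_inner_map_map hΓinner) hcross)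
    ((Submodule.eq_bot_iff _).2 fun y hy => ?_), HilbertBasis.coe_mkOfOrthogonalEqBot _ _⟩
  have hsub : Set.range ψ ⊆ Set.range (Sum.elim ψ (Γ ∘ ψ)) :=
    Set.range_subset_iff.2 fun j => Set.mem_range_self (Sum.inl j)
  have hy' : y ∈ (Submodule.span ℂ (Set.range ψ))ᗮ :=
    Submodule.orthogonal_le (Submodule.span_mono (R := ℂ) hsub) hy
  have hΓy : Γ y ∈ (Submodule.span ℂ (Set.range ψ))ᗮ := by
    refine (Submodule.mem_orthogonal _ _).2 fun u hu => ?_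
    have hΓu : Γ u ∈ K := by
      have := Submodule.mem_map_of_mem (f := Γ) hu
      rw [Submodule.map_span] at this
      refine Submodule.span_mono ?_ this
      rintro _ ⟨_, ⟨j, rfl⟩, rfl⟩
      exact ⟨.inr j, rfl⟩
    rw [← hΓΓ u, hΓinner]
    exact Submodule.inner_left_of_mem_orthogonal hΓu hy
  have h := hbp y
  rw [apply_eq_zero_of_mem_orthogonal hsa hψ_total hΓy, map_zero,
    apply_eq_zero_of_mem_orthogonal hsa hψ_total hy', sub_zero] at h
  exact h.symm

theorem nnnorm_apply_sq_eq_tsum [CompleteSpace H] (φ : H) :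
    (‖P φ‖₊ : ℝ≥0∞) ^ 2 = ∑' j, (‖⟪ψ j, φ⟫‖₊ : ℝ≥0∞) ^ 2 := by
  obtain ⟨b, hb⟩ :=
    exists_hilbertBasis_sum_elim hΓΓ hΓinner hsa hbp hψ_on hψ_fix hψ_total
  rw [← b.tsum_nnnorm_inner_sq_s12, ENNReal.summable.tsum_sum ENNReal.summable, hb]
  simp [← hsa, hψ_fix, apply_map_eq_zero_of_apply_eq_self_s12 hΓΓ hbp]

end BasisProjection

theorem tsum_nnnorm_sub_apply_sq {H : Type*} [NormedAddCommGroup H] [InnerProductSpace ℂ H]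
    {Γ : H →ₗ⋆[ℂ] H} (hΓΓ : ∀ φ : H, Γ (Γ φ) = φ)
    (hΓinner : ∀ φ ψ : H, ⟪Γ φ, Γ ψ⟫ = ⟪ψ, φ⟫) {P₁ P₂ : H →L[ℂ] H}
    (hbp₁ : ∀ ψ : H, Γ (P₁ (Γ ψ)) = ψ - P₁ ψ) (hbp₂ : ∀ ψ : H, Γ (P₂ (Γ ψ)) = ψ - P₂ ψ)
    {J : Type*} {ψ : J → H} (hψ_fix : ∀ j : J, P₁ (ψ j) = ψ j) :
    ∑' s, (‖(P₁ - P₂) (Sum.elim ψ (Γ ∘ ψ) s)‖₊ : ℝ≥0∞) ^ 2 =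
      2 * ∑' j, (‖P₂ (Γ (ψ j))‖₊ : ℝ≥0∞) ^ 2 := by
  have hΓnorm (x : H) : ‖Γ x‖₊ = ‖x‖₊ := NNReal.eq (norm_map_of_inner_map_map_s12 hΓinner x)
  rw [ENNReal.summable.tsum_sum ENNReal.summable, two_mul]
  simp [hψ_fix, ← hbp₂, hΓnorm, apply_map_eq_zero_of_apply_eq_self_s12 hΓΓ hbp₁ (hψ_fix _)]

theorem sum_eq_double_sum_overlaps_general
    {H : Type*} [NormedAddCommGroup H] [InnerProductSpace ℂ H] [CompleteSpace H]
    [TopologicalSpace.SeparableSpace H]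
    (Γ : H →ₗ⋆[ℂ] H)
    (hΓΓ : ∀ φ : H, Γ (Γ φ) = φ)
    (hΓinner : ∀ φ ψ : H, ⟪Γ φ, Γ ψ⟫ = ⟪ψ, φ⟫)
    (P₁ P₂ : H →L[ℂ] H)
    (hsa₁ : ∀ φ ψ : H, ⟪P₁ φ, ψ⟫ = ⟪φ, P₁ ψ⟫)
    (hbp₁ : ∀ ψ : H, Γ (P₁ (Γ ψ)) = ψ - P₁ ψ)
    (hidem₂ : ∀ ψ : H, P₂ (P₂ ψ) = P₂ ψ)
    (hsa₂ : ∀ φ ψ : H, ⟪P₂ φ, ψ⟫ = ⟪φ, P₂ ψ⟫)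
    (hbp₂ : ∀ ψ : H, Γ (P₂ (Γ ψ)) = ψ - P₂ ψ)
    {J : Type*} (ψt ψb : J → H)
    (hψt_on : Orthonormal ℂ ψt) (hψt_fix : ∀ j : J, P₁ (ψt j) = ψt j)
    (hψt_total : (Submodule.span ℂ (Set.range ψt)).topologicalClosure =
      LinearMap.range (P₁ : H →ₗ[ℂ] H))
    (hψb_on : Orthonormal ℂ ψb) (hψb_fix : ∀ j : J, P₂ (ψb j) = ψb j)
    (hψb_total : (Submodule.span ℂ (Set.range ψb)).topologicalClosure =
      LinearMap.range (P₂ : H →ₗ[ℂ] H)) :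
    (∑' j : J, ENNReal.ofReal (⟪ψt j, ψt j - P₂ (ψt j)⟫).re =
        ∑' p : J × J, (‖⟪ψb p.1, Γ (ψt p.2)⟫‖₊ : ℝ≥0∞) ^ 2) ∧
      (IsHilbertSchmidt (P₁ - P₂) ↔
        ∑' p : J × J, (‖⟪ψb p.1, Γ (ψt p.2)⟫‖₊ : ℝ≥0∞) ^ 2 < ⊤) := by
  have hS : ∑' j, (‖P₂ (Γ (ψt j))‖₊ : ℝ≥0∞) ^ 2 =
      ∑' p : J × J, (‖⟪ψb p.1, Γ (ψt p.2)⟫‖₊ : ℝ≥0∞) ^ 2 := by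
    simp_rw [nnnorm_apply_sq_eq_tsum hΓΓ hΓinner hsa₂ hbp₂ hψb_on hψb_fix hψb_total]
    rw [ENNReal.tsum_comm]
    exact ENNReal.tsum_prod.symm
  obtain ⟨bt, hbt⟩ := exists_hilbertBasis_sum_elim hΓΓ hΓinner hsa₁ hbp₁ hψt_on hψt_fix hψt_total
  refine ⟨?_, ?_⟩
  · rw [← hS]
    refine tsum_congr fun j => ?_
    rw [inner_sub_apply_eq_norm_sq hΓΓ hΓinner hidem₂ hsa₂ hbp₂, Complex.ofReal_re,
      ENNReal.ofReal_norm_sq]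
  · rw [isHilbertSchmidt_iff_tsum_lt_top bt, hbt,
      tsum_nnnorm_sub_apply_sq hΓΓ hΓinner hbp₁ hbp₂ hψt_fix, hS]
    simp [lt_top_iff_ne_top, ENNReal.mul_eq_top]

/-- for basis projections `P₁, P₂` on the self-dual Hilbert space
`(H, Γ)`, an orthonormal basis `{ψ̃_j}_{j∈J}` of `ran P₁` and an orthonormal
basis `{ψ̆_i}_{i∈J}` of `ran P₂`, one has
`Σ_j ⟨ψ̃_j, (1 - P₂) ψ̃_j⟩ = Σ_{i,j} |⟨ψ̆_i, Γ ψ̃_j⟩|²`; consequently `P₁ - P₂`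
is Hilbert--Schmidt iff `Σ_{i,j} |⟨ψ̆_i, Γ ψ̃_j⟩|² < ∞`. -/
theorem sum_eq_double_sum_overlaps
    {H : Type*} [NormedAddCommGroup H] [InnerProductSpace ℂ H] [CompleteSpace H]
    [TopologicalSpace.SeparableSpace H]
    (Γ : H →ₗ⋆[ℂ] H)
    (hΓΓ : ∀ φ : H, Γ (Γ φ) = φ)
    (hΓinner : ∀ φ ψ : H, ⟪Γ φ, Γ ψ⟫ = ⟪ψ, φ⟫)
    (P₁ P₂ : H →L[ℂ] H)
    (hidem₁ : ∀ ψ : H, P₁ (P₁ ψ) = P₁ ψ)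
    (hsa₁ : ∀ φ ψ : H, ⟪P₁ φ, ψ⟫ = ⟪φ, P₁ ψ⟫)
    (hbp₁ : ∀ ψ : H, Γ (P₁ (Γ ψ)) = ψ - P₁ ψ)
    (hidem₂ : ∀ ψ : H, P₂ (P₂ ψ) = P₂ ψ)
    (hsa₂ : ∀ φ ψ : H, ⟪P₂ φ, ψ⟫ = ⟪φ, P₂ ψ⟫)
    (hbp₂ : ∀ ψ : H, Γ (P₂ (Γ ψ)) = ψ - P₂ ψ)
    {J : Type*} (ψt ψb : J → H)
    (hψt_on : Orthonormal ℂ ψt) (hψt_fix : ∀ j : J, P₁ (ψt j) = ψt j)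
    (hψt_total : (Submodule.span ℂ (Set.range ψt)).topologicalClosure =
      LinearMap.range (P₁ : H →ₗ[ℂ] H))
    (hψb_on : Orthonormal ℂ ψb) (hψb_fix : ∀ j : J, P₂ (ψb j) = ψb j)
    (hψb_total : (Submodule.span ℂ (Set.range ψb)).topologicalClosure =
      LinearMap.range (P₂ : H →ₗ[ℂ] H)) :
    (∑' j : J, ENNReal.ofReal (⟪ψt j, ψt j - P₂ (ψt j)⟫).re =
        ∑' p : J × J, (‖⟪ψb p.1, Γ (ψt p.2)⟫‖₊ : ℝ≥0∞) ^ 2) ∧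
      (IsHilbertSchmidt (P₁ - P₂) ↔
        ∑' p : J × J, (‖⟪ψb p.1, Γ (ψt p.2)⟫‖₊ : ℝ≥0∞) ^ 2 < ⊤) :=
  sum_eq_double_sum_overlaps_general Γ hΓΓ hΓinner P₁ P₂ hsa₁ hbp₁ hidem₂ hsa₂ hbp₂ ψt ψb hψt_on
    hψt_fix hψt_total hψb_on hψb_fix hψb_total
end
end

section
/- Let P₁, P₂ be basis projections on the self-dual Hilbert space (H, Γ), with associated quasi-free states ω_{P₁}, ω_{P₂}, let {ψ̃_j}_{j∈J} be an orthonormal basis of the range of P₁ and {ψ̆_i}_{i∈J} an orthonormal basis of the range of P₂. Then ‖ω_{P₁} − ω_{P₂}‖²_F = 2 Σ_{i,j∈J} |⟨ψ̆_i, Γψ̃_j⟩|², where in computing ‖·‖_F the outer index sum is taken over the orthonormal basis {ψ̆_i} ∪ {Γψ̆_i} of H and the inner index sum over the orthonormal basis {ψ̃_j} ∪ {Γψ̃_j} of H. -/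
open scoped ComplexOrder ComplexInnerProductSpace

noncomputable section

/-- A self-dual CAR algebra structure on a unital C*-algebra `A` over the
self-dual Hilbert space `(H, Γ)`:  `conj` is the antiunitary involution `Γ`
and `B : H → A` are the self-dual CAR generators. -/
structure SelfDualCAR (H A : Type*) [NormedAddCommGroup H] [InnerProductSpace ℂ H]
    [NormedRing A] [StarRing A] [NormedAlgebra ℂ A] where
  conj : H →ₗ⋆[ℂ] H
  conj_conj : ∀ φ : H, conj (conj φ) = φ
  conj_inner : ∀ φ ψ : H, ⟪conj φ, conj ψ⟫ = ⟪ψ, φ⟫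
  B : H → A
  star_B : ∀ φ : H, star (B φ) = B (conj φ)
  B_add : ∀ φ ψ : H, B (φ + ψ) = B φ + B ψ
  B_smul : ∀ (c : ℂ) (φ : H), B (c • φ) = (starRingEnd ℂ c) • B φ
  car_rel : ∀ φ ψ : H, B φ * star (B ψ) + star (B ψ) * B φ = ⟪φ, ψ⟫ • 1

/-- A state on a unital C*-algebra: a normalized positive linear functional. -/
structure CState (A : Type*) [NormedRing A] [StarRing A] [NormedAlgebra ℂ A] where
  val : A →ₗ[ℂ] ℂ
  pos : ∀ a : A, 0 ≤ val (star a * a)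
  unital : val 1 = 1

variable {H A : Type*}

/-- `P` is a basis projection on the self-dual Hilbert space `(H, Γ)`: an
orthogonal projection with `Γ P Γ = 1 - P`. -/
def SelfDualCAR.IsBasisProjection [NormedAddCommGroup H] [InnerProductSpace ℂ H]
    [NormedRing A] [StarRing A] [NormedAlgebra ℂ A]
    (car : SelfDualCAR H A) (P : H →L[ℂ] H) : Prop :=
  (∀ ψ : H, P (P ψ) = P ψ) ∧ (∀ φ ψ : H, ⟪P φ, ψ⟫ = ⟪φ, P ψ⟫) ∧
    (∀ ψ : H, car.conj (P (car.conj ψ)) = ψ - P ψ)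

/-- `ω` is the quasi-free (Fock) state associated with the basis projection `P`,
i.e. the (unique) state whose two-point function is
`ω(B(φ₁)B(φ₂)*) = ⟨φ₁, P φ₂⟩`. -/
def SelfDualCAR.IsQuasiFreeState [NormedAddCommGroup H] [InnerProductSpace ℂ H]
    [NormedRing A] [StarRing A] [NormedAlgebra ℂ A]
    (car : SelfDualCAR H A) (P : H →L[ℂ] H) (ω : CState A) : Prop :=
  ∀ φ ψ : H, ω.val (car.B φ * star (car.B ψ)) = ⟪φ, P ψ⟫

open scoped ENNReal

/-!
The two-point functions of `ω_{P₁}` and `ω_{P₂}` differ by `⟪φ, (P₁ - P₂) ψ⟫`. Since `ΓPΓ = 1 - P`,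
`P₂` fixes `ψ̆_i` and kills `Γψ̆_i`, while `P₁` fixes `ψ̃_j` and kills `Γψ̃_j`. Hence in the adapted
bases the two diagonal blocks vanish, and each off-diagonal block is, up to sign and complex
conjugation, the overlap matrix `⟪ψ̆_i, Γψ̃_j⟫`.
-/

lemma ENNReal.tsum_sum_prod_sum {α β γ δ : Type*} (f : (α ⊕ β) × (γ ⊕ δ) → ℝ≥0∞) :
    ∑' p, f p =
      ∑' p : α × γ, f (.inl p.1, .inl p.2) + ∑' p : α × δ, f (.inl p.1, .inr p.2) +
        ∑' p : β × γ, f (.inr p.1, .inl p.2) + ∑' p : β × δ, f (.inr p.1, .inr p.2) := by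
  simp only [ENNReal.tsum_prod', ENNReal.summable.tsum_sum ENNReal.summable, ENNReal.tsum_add]
  ring

namespace SelfDualCAR

variable [NormedAddCommGroup H] [InnerProductSpace ℂ H] [NormedRing A] [StarRing A]
  [NormedAlgebra ℂ A] (car : SelfDualCAR H A)

lemma nnnorm_inner_conj_left (φ ψ : H) : ‖⟪car.conj φ, ψ⟫‖₊ = ‖⟪φ, car.conj ψ⟫‖₊ := by
  rw [← car.conj_conj ψ, car.conj_inner, car.conj_conj, ← inner_conj_symm, RCLike.nnnorm_conj]

variable {car} {P : H →L[ℂ] H}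

lemma IsBasisProjection.apply_conj_eq_zero (hP : car.IsBasisProjection P) {ψ : H}
    (hψ : P ψ = ψ) : P (car.conj ψ) = 0 := by
  have h := congrArg car.conj (hP.2.2 ψ)
  rw [car.conj_conj] at h
  rw [h, hψ, sub_self, map_zero]

lemma IsBasisProjection.inner_apply_of_apply_eq_self (hP : car.IsBasisProjection P) {φ : H}
    (hφ : P φ = φ) (ψ : H) : ⟪φ, P ψ⟫ = ⟪φ, ψ⟫ := by
  rw [← hP.2.1, hφ]

lemma IsBasisProjection.inner_conj_apply_of_apply_eq_self (hP : car.IsBasisProjection P)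
    {φ : H} (hφ : P φ = φ) (ψ : H) : ⟪car.conj φ, P ψ⟫ = 0 := by
  rw [← hP.2.1, hP.apply_conj_eq_zero hφ, inner_zero_left]

end SelfDualCAR

theorem fNorm_sq_eq_twice_overlap_sum_general
    [NormedAddCommGroup H] [InnerProductSpace ℂ H]
    [NormedRing A] [StarRing A] [NormedAlgebra ℂ A]
    (car : SelfDualCAR H A) (P₁ P₂ : H →L[ℂ] H)
    (hP₁ : car.IsBasisProjection P₁) (hP₂ : car.IsBasisProjection P₂)
    (ω₁ ω₂ : CState A)
    (hω₁ : car.IsQuasiFreeState P₁ ω₁) (hω₂ : car.IsQuasiFreeState P₂ ω₂)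
    {J : Type*} (ψt ψb : J → H)
    (hψt_fix : ∀ j : J, P₁ (ψt j) = ψt j) (hψb_fix : ∀ j : J, P₂ (ψb j) = ψb j)
    (b₁ : HilbertBasis (J ⊕ J) ℂ H)
    (hb₁l : ∀ j : J, b₁ (Sum.inl j) = ψt j)
    (hb₁r : ∀ j : J, b₁ (Sum.inr j) = car.conj (ψt j))
    (b₂ : HilbertBasis (J ⊕ J) ℂ H)
    (hb₂l : ∀ j : J, b₂ (Sum.inl j) = ψb j)
    (hb₂r : ∀ j : J, b₂ (Sum.inr j) = car.conj (ψb j)) :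
    ∑' p : (J ⊕ J) × (J ⊕ J),
        (‖ω₁.val (car.B (b₂ p.1) * star (car.B (b₁ p.2))) -
            ω₂.val (car.B (b₂ p.1) * star (car.B (b₁ p.2)))‖₊ : ℝ≥0∞) ^ 2 =
      2 * ∑' p : J × J, (‖⟪ψb p.1, car.conj (ψt p.2)⟫‖₊ : ℝ≥0∞) ^ 2 := by
  rw [ENNReal.tsum_sum_prod_sum]
  simp only [hb₁l, hb₁r, hb₂l, hb₂r, hω₁ _ _, hω₂ _ _, hψt_fix,
    hP₁.apply_conj_eq_zero (hψt_fix _), hP₂.inner_apply_of_apply_eq_self (hψb_fix _),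
    hP₂.inner_conj_apply_of_apply_eq_self (hψb_fix _), inner_zero_right, sub_self, zero_sub,
    sub_zero, nnnorm_neg, car.nnnorm_inner_conj_left, nnnorm_zero, ENNReal.coe_zero,
    zero_pow two_ne_zero, tsum_zero, zero_add, add_zero, two_mul]

/-- for basis projections `P₁, P₂` with quasi-free states
`ω_{P₁}, ω_{P₂}`, an orthonormal basis `{ψ̃_j}_{j∈J}` of `ran P₁` and an
orthonormal basis `{ψ̆_i}_{i∈J}` of `ran P₂` (so that `{ψ̃_j} ∪ {Γψ̃_j}` and
`{ψ̆_i} ∪ {Γψ̆_i}` are orthonormal bases of `H`),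
`‖ω_{P₁} - ω_{P₂}‖²_F = 2 Σ_{i,j} |⟨ψ̆_i, Γψ̃_j⟩|²`, the `F`-norm being computed
with the outer index running over `{ψ̆_i} ∪ {Γψ̆_i}` and the inner index over
`{ψ̃_j} ∪ {Γψ̃_j}`. -/
theorem fNorm_sq_eq_twice_overlap_sum
    [NormedAddCommGroup H] [InnerProductSpace ℂ H] [CompleteSpace H]
    [TopologicalSpace.SeparableSpace H]
    [NormedRing A] [StarRing A] [CStarRing A] [NormedAlgebra ℂ A] [StarModule ℂ A]
    [CompleteSpace A]
    (car : SelfDualCAR H A) (P₁ P₂ : H →L[ℂ] H)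
    (hP₁ : car.IsBasisProjection P₁) (hP₂ : car.IsBasisProjection P₂)
    (ω₁ ω₂ : CState A)
    (hω₁ : car.IsQuasiFreeState P₁ ω₁) (hω₂ : car.IsQuasiFreeState P₂ ω₂)
    {J : Type*} (ψt ψb : J → H)
    (hψt_fix : ∀ j : J, P₁ (ψt j) = ψt j) (hψb_fix : ∀ j : J, P₂ (ψb j) = ψb j)
    (b₁ : HilbertBasis (J ⊕ J) ℂ H)
    (hb₁l : ∀ j : J, b₁ (Sum.inl j) = ψt j)
    (hb₁r : ∀ j : J, b₁ (Sum.inr j) = car.conj (ψt j))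
    (b₂ : HilbertBasis (J ⊕ J) ℂ H)
    (hb₂l : ∀ j : J, b₂ (Sum.inl j) = ψb j)
    (hb₂r : ∀ j : J, b₂ (Sum.inr j) = car.conj (ψb j)) :
    ∑' p : (J ⊕ J) × (J ⊕ J),
        (‖ω₁.val (car.B (b₂ p.1) * star (car.B (b₁ p.2))) -
            ω₂.val (car.B (b₂ p.1) * star (car.B (b₁ p.2)))‖₊ : ℝ≥0∞) ^ 2 =
      2 * ∑' p : J × J, (‖⟪ψb p.1, car.conj (ψt p.2)⟫‖₊ : ℝ≥0∞) ^ 2 :=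
  fNorm_sq_eq_twice_overlap_sum_general car P₁ P₂ hP₁ hP₂ ω₁ ω₂ hω₁ hω₂ ψt ψb hψt_fix hψb_fix b₁
    hb₁l hb₁r b₂ hb₂l hb₂r
end
end

section
/- Let P₁, P₂ be basis projections on the self-dual Hilbert space (H, Γ) such that P₁ − P₂ is a Hilbert–Schmidt operator. Then the subspace P₁H ∩ P₂⊥H of H is finite-dimensional. -/
open scoped ComplexInnerProductSpace
open scoped ENNReal

noncomputable section

/-! On `P₁H ∩ P₂⊥H` the operator `P₁ - P₂` is the identity, so it suffices that a
Hilbert–Schmidt operator `T` fixes no infinite-dimensional subspace. For an orthonormal family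
`e` and a Hilbert basis `b`, Parseval in `b`, swapping the double sum and Bessel in `e` give
`∑ ‖T eₙ‖² ≤ ∑ ‖T* bᵢ‖²`; applied twice this bounds `∑ ‖T eₙ‖²` by `∑ ‖T bᵢ‖² < ∞`. An
infinite-dimensional subspace contains an orthonormal sequence (Gram–Schmidt), on which a
fixing `T` would give `∑ ‖T eₙ‖² = ∑ 1 = ∞`. -/

lemma tsum_enorm_sq_eq_ofReal {ι E : Type*} [SeminormedAddGroup E] {f : ι → E}
    (hf : Summable fun i => ‖f i‖ ^ 2) :
    ∑' i, ‖f i‖ₑ ^ 2 = ENNReal.ofReal (∑' i, ‖f i‖ ^ 2) := by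
  rw [ENNReal.ofReal_tsum_of_nonneg (fun i => by positivity) hf]
  simp only [ENNReal.ofReal_pow (norm_nonneg _), ofReal_norm]

section

variable {𝕜 E : Type*} [RCLike 𝕜] [NormedAddCommGroup E] [InnerProductSpace 𝕜 E]

lemma Orthonormal.tsum_enorm_inner_sq_le {ι : Type*} {e : ι → E} (he : Orthonormal 𝕜 e)
    (x : E) : ∑' i, ‖inner 𝕜 (e i) x‖ₑ ^ 2 ≤ ‖x‖ₑ ^ 2 := by
  rw [tsum_enorm_sq_eq_ofReal (he.inner_products_summable x), ← ofReal_norm,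
    ← ENNReal.ofReal_pow (norm_nonneg _)]
  exact ENNReal.ofReal_le_ofReal (he.tsum_inner_products_le x)

lemma HilbertBasis.tsum_enorm_inner_sq [CompleteSpace E] {ι : Type*} (b : HilbertBasis ι 𝕜 E)
    (x : E) : ∑' i, ‖inner 𝕜 (b i) x‖ₑ ^ 2 = ‖x‖ₑ ^ 2 := by
  have h := lp.norm_rpow_eq_tsum (p := 2) (by norm_num) (b.repr x)
  simp only [ENNReal.toReal_ofNat, Real.rpow_two, HilbertBasis.repr_apply_apply,
    LinearIsometryEquiv.norm_map] at h
  rw [tsum_enorm_sq_eq_ofReal (b.orthonormal.inner_products_summable x), ← h, ← ofReal_norm,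
    ENNReal.ofReal_pow (norm_nonneg _)]

lemma Orthonormal.tsum_enorm_apply_sq_le [CompleteSpace E] {κ ι : Type*} {e : κ → E}
    (he : Orthonormal 𝕜 e) (b : HilbertBasis ι 𝕜 E) (T : E →L[𝕜] E) :
    ∑' n, ‖T (e n)‖ₑ ^ 2 ≤ ∑' i, ‖T.adjoint (b i)‖ₑ ^ 2 :=
  calc ∑' n, ‖T (e n)‖ₑ ^ 2
      = ∑' n, ∑' i, ‖inner 𝕜 (e n) (T.adjoint (b i))‖ₑ ^ 2 := by
        refine tsum_congr fun n => ?_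
        rw [← b.tsum_enorm_inner_sq]
        refine tsum_congr fun i => ?_
        rw [ContinuousLinearMap.adjoint_inner_right, ← inner_conj_symm, RCLike.enorm_conj]
    _ = ∑' i, ∑' n, ‖inner 𝕜 (e n) (T.adjoint (b i))‖ₑ ^ 2 := ENNReal.tsum_comm
    _ ≤ ∑' i, ‖T.adjoint (b i)‖ₑ ^ 2 :=
        ENNReal.tsum_le_tsum fun i => he.tsum_enorm_inner_sq_le _

end

lemma exists_linearIndependent_nat_of_not_finite {K V : Type*} [DivisionRing K] [AddCommGroup V]
    [Module K V] (h : ¬Module.Finite K V) : ∃ f : ℕ → V, LinearIndependent K f := by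
  have : Infinite (Module.Basis.ofVectorSpaceIndex K V) := not_finite_iff_infinite.mp fun _ =>
    h (Module.Finite.of_basis (Module.Basis.ofVectorSpace K V))
  exact ⟨_, (Module.Basis.ofVectorSpace K V).linearIndependent.comp _
    (Infinite.natEmbedding _).injective⟩

lemma exists_orthonormal_nat_of_not_finiteDimensional {𝕜 E : Type*} [RCLike 𝕜]
    [NormedAddCommGroup E] [InnerProductSpace 𝕜 E] (h : ¬FiniteDimensional 𝕜 E) :
    ∃ e : ℕ → E, Orthonormal 𝕜 e :=
  let ⟨_, hf⟩ := exists_linearIndependent_nat_of_not_finite h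
  ⟨_, InnerProductSpace.gramSchmidtNormed_orthonormal hf⟩

namespace IsHilbertSchmidt

variable {H : Type*} [NormedAddCommGroup H] [InnerProductSpace ℂ H] [CompleteSpace H]
  {T : H →L[ℂ] H}

lemma tsum_enorm_apply_sq_ne_top (hT : IsHilbertSchmidt T) {κ : Type*} {e : κ → H}
    (he : Orthonormal ℂ e) : ∑' n, ‖T (e n)‖ₑ ^ 2 ≠ ∞ := by
  obtain ⟨ι, b, hb⟩ := hT
  have hadj : ∑' i, ‖T.adjoint (b i)‖ₑ ^ 2 ≤ ∑' i, ‖T (b i)‖ₑ ^ 2 := by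
    simpa only [ContinuousLinearMap.adjoint_adjoint] using
      b.orthonormal.tsum_enorm_apply_sq_le b T.adjoint
  refine ne_top_of_le_ne_top ?_ ((he.tsum_enorm_apply_sq_le b T).trans hadj)
  rw [tsum_enorm_sq_eq_ofReal hb]
  exact ENNReal.ofReal_ne_top

lemma finiteDimensional_of_forall_apply_eq (hT : IsHilbertSchmidt T) (V : Submodule ℂ H)
    (hV : ∀ v ∈ V, T v = v) : FiniteDimensional ℂ V := by
  by_contra hinf
  obtain ⟨e, he⟩ := exists_orthonormal_nat_of_not_finiteDimensional hinf
  apply hT.tsum_enorm_apply_sq_ne_top (he.comp_linearIsometry V.subtypeₗᵢ)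
  have hnorm : ∀ n, ‖T (e n)‖ₑ ^ 2 = 1 := fun n => by
    rw [hV _ (e n).2, ← ofReal_norm, ← Submodule.coe_norm, he.1 n, ENNReal.ofReal_one, one_pow]
  simp [hnorm]

end IsHilbertSchmidt

theorem inter_finiteDimensional_of_hs_general
    {H : Type*} [NormedAddCommGroup H] [InnerProductSpace ℂ H] [CompleteSpace H]
    (P₁ P₂ : H →L[ℂ] H)
    (hidem₁ : ∀ ψ : H, P₁ (P₁ ψ) = P₁ ψ)
    (hidem₂ : ∀ ψ : H, P₂ (P₂ ψ) = P₂ ψ)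
    (hHS : IsHilbertSchmidt (P₁ - P₂)) :
    FiniteDimensional ℂ
      ↥(LinearMap.range (P₁ : H →ₗ[ℂ] H) ⊓
        LinearMap.range ((1 - P₂ : H →L[ℂ] H) : H →ₗ[ℂ] H)) := by
  refine hHS.finiteDimensional_of_forall_apply_eq _ fun v ⟨⟨x, hx⟩, ⟨y, hy⟩⟩ => ?_
  have hP₁ : P₁ v = v := by rw [← hx]; exact hidem₁ x
  have hP₂ : P₂ v = 0 := by rw [← hy]; simp [hidem₂]
  simp [hP₁, hP₂]

/-- if `P₁, P₂` are basis projections on the self-dual Hilbert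
space `(H, Γ)` with `P₁ - P₂` Hilbert--Schmidt, then the subspace
`P₁H ∩ P₂⊥H` is finite dimensional. -/
theorem inter_finiteDimensional_of_hs
    {H : Type*} [NormedAddCommGroup H] [InnerProductSpace ℂ H] [CompleteSpace H]
    [TopologicalSpace.SeparableSpace H]
    (Γ : H →ₗ⋆[ℂ] H)
    (hΓΓ : ∀ φ : H, Γ (Γ φ) = φ)
    (hΓinner : ∀ φ ψ : H, ⟪Γ φ, Γ ψ⟫ = ⟪ψ, φ⟫)
    (P₁ P₂ : H →L[ℂ] H)
    (hidem₁ : ∀ ψ : H, P₁ (P₁ ψ) = P₁ ψ)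
    (hsa₁ : ∀ φ ψ : H, ⟪P₁ φ, ψ⟫ = ⟪φ, P₁ ψ⟫)
    (hbp₁ : ∀ ψ : H, Γ (P₁ (Γ ψ)) = ψ - P₁ ψ)
    (hidem₂ : ∀ ψ : H, P₂ (P₂ ψ) = P₂ ψ)
    (hsa₂ : ∀ φ ψ : H, ⟪P₂ φ, ψ⟫ = ⟪φ, P₂ ψ⟫)
    (hbp₂ : ∀ ψ : H, Γ (P₂ (Γ ψ)) = ψ - P₂ ψ)
    (hHS : IsHilbertSchmidt (P₁ - P₂)) :
    FiniteDimensional ℂ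
      ↥(LinearMap.range (P₁ : H →ₗ[ℂ] H) ⊓
        LinearMap.range ((1 - P₂ : H →L[ℂ] H) : H →ₗ[ℂ] H)) :=
  inter_finiteDimensional_of_hs_general P₁ P₂ hidem₁ hidem₂ hHS
end
end
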